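/- arXiv:1804.09040 — 3 statements merged into one kernel-verified Lean document; each statement's English description precedes it below -/
import Mathlib

section
/- Fix binary values w_{k,i} ∈ {0,1} with Σ_k w_{k,i} = 1 for every slot i. Then a power matrix P with P_{k,i} ≥ 0 satisfies the constraints τ·P_{k,1} ≤ w_{k,1}·E₀ᵏ, τ·P_{k,i} ≤ w_{k,i}·(E₀ᵏ + Σ_{j=1}^M E_H^{k,j}) for i ≥ 2, and Σ_{j=1}^i τ·P_{k,j} ≤ E₀ᵏ + Σ_{j=1}^{i-1}(1 − w_{k,j})·E_H^{k,j} for i ≥ 2, if and only if it satisfies the coupled constraints τ·w_{k,1}·P_{k,1} ≤ E₀ᵏ and Σ_{j=1}^i τ·w_{k,j}·P_{k,j} ≤ E₀ᵏ + Σ_{j=1}^{i-1}(1 − w_{k,j})·E_H^{k,j} for i ≥ 2, together with P_{k,i} = 0 whenever w_{k,i} = 0. -/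
/-!
For a binary indicator `w`, a per-slot bound `τ p ≤ w B` with `B ≥ 0` says exactly that `p = 0`
when `w = 0` and `τ p ≤ B`. Once idle slots carry zero power, `τ w p = τ p`, so the cumulative
constraints of the two systems coincide, and the per-slot bounds for later slots are implied by
the cumulative ones because the energy harvested before slot `i` is at most `∑ j, E_H j`.
-/

open Finset

section Binary

variable {R : Type*}

theorem binary_mul_eq_self [MulZeroOneClass R] {w p : R} (hw : w = 0 ∨ w = 1)
    (hidle : w = 0 → p = 0) : w * p = p := by
  rcases hw with rfl | rfl
  · rw [hidle rfl, mul_zero]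
  · exact one_mul p

variable [CommRing R] [LinearOrder R] [IsStrictOrderedRing R]

theorem mul_le_binary_mul_iff {τ p w B : R} (hτ : 0 < τ) (hp : 0 ≤ p) (hB : 0 ≤ B)
    (hw : w = 0 ∨ w = 1) : τ * p ≤ w * B ↔ (w = 0 → p = 0) ∧ τ * p ≤ B := by
  rcases hw with rfl | rfl
  · simp only [zero_mul, true_implies]
    constructor
    · intro h
      exact ⟨le_antisymm (nonpos_of_mul_nonpos_right h hτ) hp, h.trans hB⟩
    · rintro ⟨rfl, -⟩
      rw [mul_zero]
  · simp [one_mul]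

theorem sum_one_sub_mul_le_sum {ι : Type*} [Fintype ι] (s : Finset ι) {w e : ι → R}
    (hw : ∀ j, 0 ≤ w j) (he : ∀ j, 0 ≤ e j) : ∑ j ∈ s, (1 - w j) * e j ≤ ∑ j, e j :=
  calc ∑ j ∈ s, (1 - w j) * e j
      ≤ ∑ j ∈ s, e j := sum_le_sum fun j _ => by nlinarith [mul_nonneg (hw j) (he j)]
    _ ≤ ∑ j, e j := sum_le_univ_sum_of_nonneg he

end Binary

theorem stmt_5_general (K M : ℕ) (hM : 0 < M) (τ : ℝ) (hτ : 0 < τ)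
    (E0 : Fin K → ℝ) (hE0 : ∀ k, 0 ≤ E0 k)
    (EH : Fin K → Fin M → ℝ) (hEH : ∀ k j, 0 ≤ EH k j)
    (w : Fin K → Fin M → ℝ)
    (hw01 : ∀ k i, w k i = 0 ∨ w k i = 1)
    (P : Fin K → Fin M → ℝ) (hP : ∀ k i, 0 ≤ P k i) :
    ((∀ k, τ * P k ⟨0, hM⟩ ≤ w k ⟨0, hM⟩ * E0 k) ∧
     (∀ k (i : Fin M), 1 ≤ i.val →
        τ * P k i ≤ w k i * (E0 k + ∑ j, EH k j)) ∧
     (∀ k (i : Fin M), 1 ≤ i.val →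
        ∑ j ∈ Finset.Iic i, τ * P k j ≤
          E0 k + ∑ j ∈ Finset.Iio i, (1 - w k j) * EH k j))
    ↔
    ((∀ k, τ * w k ⟨0, hM⟩ * P k ⟨0, hM⟩ ≤ E0 k) ∧
     (∀ k (i : Fin M), 1 ≤ i.val →
        ∑ j ∈ Finset.Iic i, τ * w k j * P k j ≤
          E0 k + ∑ j ∈ Finset.Iio i, (1 - w k j) * EH k j) ∧
     (∀ k i, w k i = 0 → P k i = 0)) := by
  have hbudget : ∀ k, 0 ≤ E0 k + ∑ j, EH k j := fun k =>
    add_nonneg (hE0 k) (sum_nonneg fun j _ => hEH k j)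
  have hweight : ∀ k j, 0 ≤ w k j := fun k j => by rcases hw01 k j with h | h <;> simp [h]
  have hcoupled : (∀ k i, w k i = 0 → P k i = 0) → ∀ k j, τ * w k j * P k j = τ * P k j :=
    fun hidle k j => by rw [mul_assoc, binary_mul_eq_self (hw01 k j) (hidle k j)]
  constructor
  · rintro ⟨hfirst, hslot, hcum⟩
    have hidle : ∀ k i, w k i = 0 → P k i = 0 := by
      intro k i
      rcases Nat.eq_zero_or_pos i.val with h0 | hpos
      · obtain rfl : i = ⟨0, hM⟩ := Fin.ext h0
        exact ((mul_le_binary_mul_iff hτ (hP k _) (hE0 k) (hw01 k _)).1 (hfirst k)).1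
      · exact ((mul_le_binary_mul_iff hτ (hP k i) (hbudget k) (hw01 k i)).1 (hslot k i hpos)).1
    simp only [hcoupled hidle]
    exact ⟨fun k => ((mul_le_binary_mul_iff hτ (hP k _) (hE0 k) (hw01 k _)).1 (hfirst k)).2,
      hcum, hidle⟩
  · rintro ⟨hfirst, hcum, hidle⟩
    simp only [hcoupled hidle] at hfirst hcum
    refine ⟨fun k => (mul_le_binary_mul_iff hτ (hP k _) (hE0 k) (hw01 k _)).2
      ⟨hidle k _, hfirst k⟩, fun k i hi => (mul_le_binary_mul_iff hτ (hP k i) (hbudget k)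
      (hw01 k i)).2 ⟨hidle k i, ?_⟩, hcum⟩
    calc τ * P k i ≤ ∑ j ∈ Iic i, τ * P k j :=
          single_le_sum (fun j _ => mul_nonneg hτ.le (hP k j)) (mem_Iic.2 le_rfl)
      _ ≤ E0 k + ∑ j ∈ Iio i, (1 - w k j) * EH k j := hcum k i hi
      _ ≤ E0 k + ∑ j, EH k j :=
          add_le_add_right (sum_one_sub_mul_le_sum _ (hweight k) (hEH k)) _

theorem stmt_5 (K M : ℕ) (hM : 0 < M) (τ : ℝ) (hτ : 0 < τ)
    (E0 : Fin K → ℝ) (hE0 : ∀ k, 0 ≤ E0 k)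
    (EH : Fin K → Fin M → ℝ) (hEH : ∀ k j, 0 ≤ EH k j)
    (w : Fin K → Fin M → ℝ)
    (hw01 : ∀ k i, w k i = 0 ∨ w k i = 1)
    (hwsum : ∀ i, ∑ k, w k i = 1)
    (P : Fin K → Fin M → ℝ) (hP : ∀ k i, 0 ≤ P k i) :
    ((∀ k, τ * P k ⟨0, hM⟩ ≤ w k ⟨0, hM⟩ * E0 k) ∧
     (∀ k (i : Fin M), 1 ≤ i.val →
        τ * P k i ≤ w k i * (E0 k + ∑ j, EH k j)) ∧
     (∀ k (i : Fin M), 1 ≤ i.val →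
        ∑ j ∈ Finset.Iic i, τ * P k j ≤
          E0 k + ∑ j ∈ Finset.Iio i, (1 - w k j) * EH k j))
    ↔
    ((∀ k, τ * w k ⟨0, hM⟩ * P k ⟨0, hM⟩ ≤ E0 k) ∧
     (∀ k (i : Fin M), 1 ≤ i.val →
        ∑ j ∈ Finset.Iic i, τ * w k j * P k j ≤
          E0 k + ∑ j ∈ Finset.Iio i, (1 - w k j) * EH k j) ∧
     (∀ k i, w k i = 0 → P k i = 0)) :=
  stmt_5_general K M hM τ hτ E0 hE0 EH hEH w hw01 P hP
end

section
/- Consider maximizing Σ_{i=1}^M log₂(1 + h_i·P_i/σ²) over P_i ≥ 0 subject to Σ_{j=1}^i τ·P_j ≤ E_i for i = 1,…,M, where 0 ≤ E_1 ≤ E_2 ≤ … ≤ E_M (cumulative available energy). Then any optimal solution P* satisfies the KKT water-filling form: there exist nonnegative multipliers θ_1,…,θ_M (θ_i associated with the i-th cumulative constraint) such that P*_i = max{0, 1/(ln 2 · τ · Σ_{j=i}^M θ_j) − σ²/h_i} for each i with h_i > 0, and complementary slackness θ_i·(Σ_{j=1}^i τ·P*_j − E_i) = 0 holds. -/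
/-!
Let `u j = h j / (ln 2 · τ · (σ² + h j · P j))` be the marginal rate per unit of energy in
slot `j`. Shifting a little energy from a slot `a` to a later slot `b` keeps every cumulative
constraint, so Fermat's rule along this feasible direction gives `u b ≤ u a` whenever `P a > 0`.
Shifting energy from a slot `k` back to an earlier slot `i` is feasible while the constraints
`i, …, k - 1` are slack. Since the energies are nondecreasing, a slack constraint `i` stays slack
up to the next slot `k > i` with `P k > 0`, and such a slot exists because otherwise the spare
energy could be spent in slot `i`. Hence a slack constraint `i` forces `u i ≤ u k` for some
`k > i`.

The multipliers are the decrements `θ i = S i - S (i + 1)` of the water level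
`S n = max (0, max_{j ≥ n} u j)`, so that `∑_{j ≥ i} θ j = S i`. The level equals `u i` where
`P i > 0` and dominates it where `P i = 0`, which is the water-filling formula, and
`S i = S (i + 1)` at every slack constraint.
-/

open Finset Filter Topology

noncomputable def marginalRate (σ2 g p : ℝ) : ℝ := g / (Real.log 2 * (σ2 + g * p))

theorem marginalRate_pos {σ2 g p : ℝ} (hσ : 0 < σ2) (hg : 0 < g) (hp : 0 ≤ p) :
    0 < marginalRate σ2 g p :=
  div_pos hg (mul_pos (Real.log_pos one_lt_two) (by positivity))

theorem hasDerivAt_logb_one_add_mul_div {σ2 g p : ℝ} (hσ : σ2 ≠ 0) (hp : σ2 + g * p ≠ 0) :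
    HasDerivAt (fun x => Real.logb 2 (1 + g * x / σ2)) (marginalRate σ2 g p) p := by
  have hne : 1 + g * p / σ2 ≠ 0 := by
    rw [one_add_div hσ]
    exact div_ne_zero hp hσ
  have := ((((hasDerivAt_id p).const_mul g).div_const σ2).const_add 1).log hne
    |>.div_const (Real.log 2)
  refine this.congr_deriv ?_
  simp only [marginalRate, id]
  field_simp

noncomputable def waterFillingPower (τ σ2 g S : ℝ) : ℝ :=
  max 0 (1 / (Real.log 2 * τ * S) - σ2 / g)

theorem eq_waterFillingPower {τ σ2 g p S : ℝ} (hτ : 0 < τ) (hσ : 0 < σ2) (hg : 0 < g)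
    (hp : 0 ≤ p) (hle : marginalRate σ2 g p / τ ≤ S)
    (heq : 0 < p → S = marginalRate σ2 g p / τ) :
    p = waterFillingPower τ σ2 g S := by
  have hL : 0 < Real.log 2 := Real.log_pos one_lt_two
  rcases hp.eq_or_lt with rfl | hp
  · rw [marginalRate, mul_zero, add_zero, div_div, div_le_iff₀ (by positivity)] at hle
    rw [waterFillingPower, eq_comm, max_eq_left_iff, sub_nonpos,
      div_le_div_iff₀ (by nlinarith) hg]
    linarith
  · have hd : 0 < σ2 + g * p := by positivity
    have hlevel : 1 / (Real.log 2 * τ * (marginalRate σ2 g p / τ)) - σ2 / g = p := by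
      rw [marginalRate]
      field_simp
      ring
    rw [heq hp, waterFillingPower, hlevel, max_eq_right hp.le]

theorem eventually_add_mul_le {a b c : ℝ} (hac : a ≤ c) (hb : 0 < b → a < c) :
    ∀ᶠ t in 𝓝[>] 0, a + t * b ≤ c := by
  rcases le_or_gt b 0 with hb0 | hb0
  · filter_upwards [self_mem_nhdsWithin] with t (ht : 0 < t)
    nlinarith
  · have hlim : Tendsto (fun t => a + t * b) (𝓝[>] 0) (𝓝 a) :=
      tendsto_nhdsWithin_of_tendsto_nhds <| by
        simpa using ((continuous_mul_const b).tendsto 0).const_add a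
    exact hlim.eventually (eventually_le_nhds (hb hb0))

variable {ι : Type*}

noncomputable def sumRate [Fintype ι] (σ2 : ℝ) (h P : ι → ℝ) : ℝ :=
  ∑ i, Real.logb 2 (1 + h i * P i / σ2)

theorem hasFDerivAt_sumRate [Fintype ι] {σ2 : ℝ} {h P : ι → ℝ} (hσ : σ2 ≠ 0)
    (hP : ∀ i, σ2 + h i * P i ≠ 0) :
    HasFDerivAt (sumRate σ2 h)
      (∑ i, marginalRate σ2 (h i) (P i) •
        ContinuousLinearMap.proj (R := ℝ) (φ := fun _ => ℝ) i) P := by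
  refine HasFDerivAt.fun_sum fun i _ => ?_
  exact (hasDerivAt_logb_one_add_mul_div hσ (hP i)).comp_hasFDerivAt P
    (hasFDerivAt_apply (𝕜 := ℝ) i P)

section Feasibility

variable [LinearOrder ι] [LocallyFiniteOrderBot ι]

def IsFeasible (τ : ℝ) (E P : ι → ℝ) : Prop :=
  (∀ i, 0 ≤ P i) ∧ ∀ i, ∑ j ∈ Iic i, τ * P j ≤ E i

variable {τ σ2 : ℝ} {h E P : ι → ℝ}

theorem sum_Iic_lt_of_forall_eq_zero (hE : Monotone E) {i m : ι} (him : i ≤ m)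
    (hi : ∑ j ∈ Iic i, τ * P j < E i) (hzero : ∀ j, i < j → j ≤ m → P j = 0) :
    ∑ j ∈ Iic m, τ * P j < E m := by
  have hsum : ∑ j ∈ Iic i, τ * P j = ∑ j ∈ Iic m, τ * P j := by
    refine sum_subset (Iic_subset_Iic.2 him) fun j hjm hji => ?_
    rw [hzero j (not_le.1 (mt mem_Iic.2 hji)) (mem_Iic.1 hjm), mul_zero]
  exact hsum ▸ hi.trans_le (hE him)

variable [Fintype ι]

theorem IsFeasible.eventually_add_smul {v : ι → ℝ} (hP : IsFeasible τ E P)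
    (hneg : ∀ j, v j < 0 → 0 < P j)
    (hslack : ∀ m, 0 < ∑ j ∈ Iic m, τ * v j → ∑ j ∈ Iic m, τ * P j < E m) :
    ∀ᶠ t in 𝓝[>] (0 : ℝ), IsFeasible τ E (P + t • v) := by
  refine (eventually_all.2 fun j => ?_).and (eventually_all.2 fun m => ?_)
  · filter_upwards [eventually_add_mul_le (neg_nonpos.2 (hP.1 j))
      (fun hv => neg_neg_iff_pos.2 (hneg j (neg_pos.1 hv)))] with t ht
    simp only [Pi.add_apply, Pi.smul_apply, smul_eq_mul]
    linarith
  · filter_upwards [eventually_add_mul_le (hP.2 m) (hslack m)] with t ht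
    simpa [mul_add, sum_add_distrib, mul_sum, mul_left_comm τ t] using ht

theorem IsMaxOn.sum_marginalRate_mul_nonpos (v : ι → ℝ) (hσ : 0 < σ2) (hh : ∀ i, 0 ≤ h i)
    (hmax : IsMaxOn (sumRate σ2 h) {Q | IsFeasible τ E Q} P) (hP : IsFeasible τ E P)
    (hneg : ∀ j, v j < 0 → 0 < P j)
    (hslack : ∀ m, 0 < ∑ j ∈ Iic m, τ * v j → ∑ j ∈ Iic m, τ * P j < E m) :
    ∑ i, marginalRate σ2 (h i) (P i) * v i ≤ 0 := by
  have hd := hasFDerivAt_sumRate hσ.ne' fun i =>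
    (add_pos_of_pos_of_nonneg hσ (mul_nonneg (hh i) (hP.1 i))).ne'
  have hv : v ∈ posTangentConeAt {Q | IsFeasible τ E Q} P :=
    mem_posTangentConeAt_of_frequently_mem (hP.eventually_add_smul hneg hslack).frequently
  simpa using hmax.localize.hasFDerivWithinAt_nonpos hd.hasFDerivWithinAt hv

theorem IsMaxOn.marginalRate_le_of_transfer (hτ : 0 ≤ τ) (hσ : 0 < σ2) (hh : ∀ i, 0 ≤ h i)
    (hmax : IsMaxOn (sumRate σ2 h) {Q | IsFeasible τ E Q} P) (hP : IsFeasible τ E P)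
    {a b : ι} (ha : 0 < P a)
    (hslack : ∀ m, b ≤ m → m < a → ∑ j ∈ Iic m, τ * P j < E m) :
    marginalRate σ2 (h b) (P b) ≤ marginalRate σ2 (h a) (P a) := by
  have := hmax.sum_marginalRate_mul_nonpos (Pi.single b 1 - Pi.single a 1) hσ hh hP
    (fun j hj => ?_) (fun m hm => ?_)
  · simpa [mul_sub, sum_sub_distrib, Pi.single_apply] using this
  · obtain rfl : j = a := by
      by_contra hja
      simp only [Pi.sub_apply, Pi.single_apply, hja, if_false, sub_zero] at hj
      split_ifs at hj <;> norm_num at hj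
    exact ha
  · simp only [mul_sub, sum_sub_distrib, Pi.sub_apply, Pi.single_apply, mul_ite, mul_one,
      mul_zero, sum_ite_eq', mem_Iic] at hm
    split_ifs at hm with hbm ham <;> first | linarith | exact hslack m hbm (not_le.1 ham)

theorem IsMaxOn.exists_le_sum_Iic_eq (hσ : 0 < σ2) (hh : ∀ i, 0 ≤ h i)
    (hmax : IsMaxOn (sumRate σ2 h) {Q | IsFeasible τ E Q} P) (hP : IsFeasible τ E P)
    {i : ι} (hi : 0 < h i) : ∃ m, i ≤ m ∧ ∑ j ∈ Iic m, τ * P j = E m := by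
  by_contra! hslack
  have := hmax.sum_marginalRate_mul_nonpos (Pi.single i 1) hσ hh hP
    (fun j hj => ?_) (fun m hm => ?_)
  · simp only [Pi.single_apply, mul_ite, mul_one, mul_zero, sum_ite_eq', mem_univ, if_true] at this
    exact (marginalRate_pos hσ hi (hP.1 i)).not_ge this
  · simp only [Pi.single_apply] at hj
    split_ifs at hj <;> norm_num at hj
  · simp only [Pi.single_apply, mul_ite, mul_one, mul_zero, sum_ite_eq', mem_Iic] at hm
    split_ifs at hm with him
    · exact (hP.2 m).lt_of_ne (hslack m him)
    · exact absurd hm (lt_irrefl 0)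

theorem IsMaxOn.exists_lt_marginalRate_le (hτ : 0 ≤ τ) (hσ : 0 < σ2) (hh : ∀ i, 0 < h i)
    (hE : Monotone E) (hmax : IsMaxOn (sumRate σ2 h) {Q | IsFeasible τ E Q} P)
    (hP : IsFeasible τ E P) {i : ι} (hi : ∑ j ∈ Iic i, τ * P j < E i) :
    ∃ k, i < k ∧ marginalRate σ2 (h i) (P i) ≤ marginalRate σ2 (h k) (P k) := by
  have hh' : ∀ i, 0 ≤ h i := fun i => (hh i).le
  by_cases hpos : ∃ k, i < k ∧ 0 < P k
  · obtain ⟨k, ⟨hik, hk⟩, hmin⟩ := wellFounded_lt.has_min _ hpos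
    refine ⟨k, hik, hmax.marginalRate_le_of_transfer hτ hσ hh' hP hk fun m him hmk =>
      sum_Iic_lt_of_forall_eq_zero hE him hi fun j hij hjm => ?_⟩
    by_contra hj
    exact hmin j ⟨hij, (hP.1 j).lt_of_ne' hj⟩ (hjm.trans_lt hmk)
  · push Not at hpos
    obtain ⟨m, him, hm⟩ := hmax.exists_le_sum_Iic_eq hσ hh' hP (hh i)
    exact absurd hm (sum_Iic_lt_of_forall_eq_zero hE him hi fun j hij _ =>
      (hpos j hij).antisymm (hP.1 j)).ne

end Feasibility

theorem Fin.sum_Ici_sub_add_one {M : ℕ} (S : ℕ → ℝ) (hS : S M = 0) (i : Fin M) :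
    ∑ j ∈ Ici i, (S j - S (j + 1)) = S i := by
  have := Finset.sum_map (Ici i) Fin.valEmbedding (fun n => S n - S (n + 1))
  rw [Fin.map_valEmbedding_Ici] at this
  simp only [Fin.valEmbedding_apply] at this
  rw [← this, ← neg_inj, ← sum_neg_distrib]
  simp only [neg_sub]
  rw [sum_Ico_sub S i.isLt.le, hS, zero_sub]

noncomputable def tailMax {M : ℕ} (u : Fin M → ℝ) (n : ℕ) : ℝ :=
  (univ.filter fun j : Fin M => n ≤ j).fold max 0 u

theorem tailMax_eq_zero {M n : ℕ} (u : Fin M → ℝ) (hn : M ≤ n) : tailMax u n = 0 := by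
  have : univ.filter (fun j : Fin M => n ≤ j) = ∅ := by
    ext j
    simpa using j.isLt.trans_le hn
  rw [tailMax, this, fold_empty]

theorem tailMax_eq_max {M : ℕ} (u : Fin M → ℝ) (i : Fin M) :
    tailMax u i = max (u i) (tailMax u (i + 1)) := by
  have : univ.filter (fun j : Fin M => (i : ℕ) ≤ j) =
      insert i (univ.filter fun j : Fin M => (i : ℕ) + 1 ≤ j) := by
    ext j
    simp only [mem_filter, mem_univ, true_and, mem_insert, Fin.ext_iff]
    omega
  rw [tailMax, this, fold_insert (by simp)]
  rfl

theorem le_tailMax {M n : ℕ} (u : Fin M → ℝ) {j : Fin M} (hj : n ≤ j) :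
    u j ≤ tailMax u n :=
  (le_fold_max _).2 (Or.inr ⟨j, by simpa using hj, le_rfl⟩)

theorem tailMax_le {M n : ℕ} {u : Fin M → ℝ} {c : ℝ} (hc : 0 ≤ c)
    (hu : ∀ j : Fin M, n ≤ j → u j ≤ c) :
    tailMax u n ≤ c :=
  (fold_max_le _).2 ⟨hc, fun j hj => hu j (by simpa using hj)⟩

theorem stmt_7_general (M : ℕ) (τ σ2 : ℝ) (hτ : 0 < τ) (hσ : 0 < σ2)
    (h : Fin M → ℝ) (hh : ∀ i, 0 < h i)
    (E : Fin M → ℝ) (hEmono : Monotone E)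
    (Pstar : Fin M → ℝ)
    (hfeas : (∀ i, 0 ≤ Pstar i) ∧
      ∀ i, ∑ j ∈ Finset.Iic i, τ * Pstar j ≤ E i)
    (hopt : ∀ P : Fin M → ℝ,
      ((∀ i, 0 ≤ P i) ∧ ∀ i, ∑ j ∈ Finset.Iic i, τ * P j ≤ E i) →
      ∑ i, Real.logb 2 (1 + h i * P i / σ2) ≤
        ∑ i, Real.logb 2 (1 + h i * Pstar i / σ2)) :
    ∃ θ : Fin M → ℝ, (∀ i, 0 ≤ θ i) ∧
      (∀ i, Pstar i =
        max 0 (1 / (Real.log 2 * τ * ∑ j ∈ Finset.Ici i, θ j) - σ2 / h i)) ∧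
      (∀ i, θ i * (∑ j ∈ Finset.Iic i, τ * Pstar j - E i) = 0) := by
  have hmax : IsMaxOn (sumRate σ2 h) {P | IsFeasible τ E P} Pstar := hopt
  have hh' : ∀ i, 0 ≤ h i := fun i => (hh i).le
  let u : Fin M → ℝ := fun i => marginalRate σ2 (h i) (Pstar i) / τ
  have hu : ∀ {i k}, marginalRate σ2 (h i) (Pstar i) ≤ marginalRate σ2 (h k) (Pstar k) →
      u i ≤ u k := fun hik => div_le_div_of_nonneg_right hik hτ.le
  refine ⟨fun i => tailMax u i - tailMax u (i + 1), fun i => ?_, fun i => ?_, fun i => ?_⟩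
  · simp only [tailMax_eq_max u i, sub_nonneg, le_max_right]
  · rw [Fin.sum_Ici_sub_add_one (tailMax u) (tailMax_eq_zero u le_rfl)]
    refine eq_waterFillingPower hτ hσ (hh i) (hfeas.1 i) (le_tailMax u le_rfl) fun hpos => ?_
    have hui : 0 ≤ u i := div_nonneg (marginalRate_pos hσ (hh i) (hfeas.1 i)).le hτ.le
    refine le_antisymm (tailMax_le hui fun j hij => hu ?_) (le_tailMax u le_rfl)
    exact hmax.marginalRate_le_of_transfer hτ.le hσ hh' hfeas hpos fun m him hmi =>
      absurd (hij.trans him) (not_le.2 hmi)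
  · rcases (hfeas.2 i).eq_or_lt with htight | hslack
    · rw [htight, sub_self, mul_zero]
    obtain ⟨k, hik, hk⟩ := hmax.exists_lt_marginalRate_le hτ.le hσ hh hEmono hfeas hslack
    have hlevel : tailMax u i = tailMax u (i + 1) := by
      rw [tailMax_eq_max u i, max_eq_right ((hu hk).trans (le_tailMax u hik))]
    simp only [hlevel, sub_self, zero_mul]

theorem stmt_7 (M : ℕ) (τ σ2 : ℝ) (hτ : 0 < τ) (hσ : 0 < σ2)
    (h : Fin M → ℝ) (hh : ∀ i, 0 < h i)
    (E : Fin M → ℝ) (hE0 : ∀ i, 0 ≤ E i) (hEmono : Monotone E)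
    (Pstar : Fin M → ℝ)
    (hfeas : (∀ i, 0 ≤ Pstar i) ∧
      ∀ i, ∑ j ∈ Finset.Iic i, τ * Pstar j ≤ E i)
    (hopt : ∀ P : Fin M → ℝ,
      ((∀ i, 0 ≤ P i) ∧ ∀ i, ∑ j ∈ Finset.Iic i, τ * P j ≤ E i) →
      ∑ i, Real.logb 2 (1 + h i * P i / σ2) ≤
        ∑ i, Real.logb 2 (1 + h i * Pstar i / σ2)) :
    ∃ θ : Fin M → ℝ, (∀ i, 0 ≤ θ i) ∧
      (∀ i, Pstar i =
        max 0 (1 / (Real.log 2 * τ * ∑ j ∈ Finset.Ici i, θ j) - σ2 / h i)) ∧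
      (∀ i, θ i * (∑ j ∈ Finset.Iic i, τ * Pstar j - E i) = 0) :=
  stmt_7_general M τ σ2 hτ hσ h hh E hEmono Pstar hfeas hopt
end

section
/- For the single-user throughput maximization problem (maximize Σ_{i=1}^M log₂(1 + h·P_i/σ²) subject to energy causality Σ_{j=1}^i τP_j ≤ E_i with E_i nondecreasing, over a constant channel h_i = h > 0), any optimal power allocation is nondecreasing in i restricted to slots with positive power, and if E_i = E for all i (all energy available initially) then the optimal allocation is constant: P*_i = E/(Mτ) for all i. -/
/-!
Moving power from a slot to a weaker one never breaks energy causality when it flows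
forward in time, and when all energy is available at once it never breaks feasibility at all.
Averaging two unequal slots strictly increases a strictly concave objective, so an optimum can
only have `P i ≤ P j` for `i ≤ j`, and with a single initial budget all slots are equal.
A strictly increasing objective leaves no budget unused, which fixes the common value.
-/

open Finset

section Allocation

variable {ι : Type*}

def EnergyFeasible [Preorder ι] [LocallyFiniteOrderBot ι] (τ : ℝ) (E P : ι → ℝ) : Prop :=
  (∀ i, 0 ≤ P i) ∧ ∀ i, ∑ j ∈ Iic i, τ * P j ≤ E i

lemma energyFeasible_const_iff [Fintype ι] [LinearOrder ι] [LocallyFiniteOrderBot ι]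
    [Nonempty ι] {τ c : ℝ} (hτ : 0 ≤ τ) {P : ι → ℝ} :
    EnergyFeasible τ (fun _ => c) P ↔ (∀ i, 0 ≤ P i) ∧ ∑ k, τ * P k ≤ c := by
  have hlast : Iic (univ.max' univ_nonempty : ι) = univ :=
    eq_univ_of_forall fun k => mem_Iic.2 (le_max' _ k (mem_univ k))
  refine ⟨fun hP => ⟨hP.1, hlast ▸ hP.2 _⟩, fun hP => ⟨hP.1, fun n => ?_⟩⟩
  calc ∑ k ∈ Iic n, τ * P k ≤ ∑ k, τ * P k :=
        sum_le_sum_of_subset_of_nonneg (subset_univ _)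
          fun k _ _ => mul_nonneg hτ (hP.1 k)
    _ ≤ c := hP.2

variable [DecidableEq ι]

lemma single_apply_nonneg (i : ι) {d : ℝ} (hd : 0 ≤ d) (k : ι) :
    0 ≤ (Pi.single i d : ι → ℝ) k :=
  (Pi.single_nonneg.2 hd : 0 ≤ (Pi.single i d : ι → ℝ)) k

def transfer (P : ι → ℝ) (i j : ι) (d : ℝ) : ι → ℝ :=
  P - (Pi.single i d : ι → ℝ) + (Pi.single j d : ι → ℝ)

lemma transfer_apply_left {P : ι → ℝ} {i j : ι} (hij : i ≠ j) (d : ℝ) :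
    transfer P i j d i = P i - d := by
  simp [transfer, hij]

lemma transfer_apply_right {P : ι → ℝ} {i j : ι} (hij : i ≠ j) (d : ℝ) :
    transfer P i j d j = P j + d := by
  simp [transfer, hij.symm]

lemma transfer_apply_of_ne {P : ι → ℝ} {i j k : ι} (hi : k ≠ i) (hj : k ≠ j) (d : ℝ) :
    transfer P i j d k = P k := by
  simp [transfer, hi, hj]

lemma sum_transfer (P : ι → ℝ) (i j : ι) (d : ℝ) (s : Finset ι) :
    ∑ k ∈ s, transfer P i j d k =
      ∑ k ∈ s, P k - (if i ∈ s then d else 0) + (if j ∈ s then d else 0) := by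
  simp only [transfer, Pi.add_apply, Pi.sub_apply, sum_add_distrib, sum_sub_distrib,
    sum_pi_single']

lemma transfer_nonneg {P : ι → ℝ} (hP : ∀ k, 0 ≤ P k) {i : ι} (j : ι) {d : ℝ} (hd : 0 ≤ d)
    (hdi : d ≤ P i) (k : ι) : 0 ≤ transfer P i j d k := by
  have hj := single_apply_nonneg j hd k
  have hi : 0 ≤ P k - (Pi.single i d : ι → ℝ) k := by
    rcases eq_or_ne k i with rfl | hki <;> simp [*, sub_nonneg]
  simp only [transfer, Pi.add_apply, Pi.sub_apply]
  linarith

lemma EnergyFeasible.transfer_of_le [Preorder ι] [LocallyFiniteOrderBot ι] {τ : ℝ}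
    {E P : ι → ℝ} (hP : EnergyFeasible τ E P) (hτ : 0 ≤ τ) {i j : ι} (hij : i ≤ j) {d : ℝ}
    (hd : 0 ≤ d) (hdi : d ≤ P i) : EnergyFeasible τ E (transfer P i j d) := by
  refine ⟨transfer_nonneg hP.1 j hd hdi, fun n => ?_⟩
  have hspent : ∑ k ∈ Iic n, transfer P i j d k ≤ ∑ k ∈ Iic n, P k := by
    rw [sum_transfer]
    by_cases hjn : j ∈ Iic n
    · have hin : i ∈ Iic n := mem_Iic.2 (hij.trans (mem_Iic.1 hjn))
      simp [hin, hjn]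
    · by_cases hin : i ∈ Iic n <;> simp [hin, hjn, hd]
  calc ∑ k ∈ Iic n, τ * transfer P i j d k = τ * ∑ k ∈ Iic n, transfer P i j d k := by
        rw [mul_sum]
    _ ≤ τ * ∑ k ∈ Iic n, P k := mul_le_mul_of_nonneg_left hspent hτ
    _ = ∑ k ∈ Iic n, τ * P k := by rw [mul_sum]
    _ ≤ E n := hP.2 n

end Allocation

section Objective

variable {ι : Type*} [Fintype ι] [DecidableEq ι] {f : ℝ → ℝ}

lemma StrictConcaveOn.add_lt_two_mul_map_add_div_two {s : Set ℝ} (hf : StrictConcaveOn ℝ s f)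
    {x y : ℝ} (hx : x ∈ s) (hy : y ∈ s) (hxy : x ≠ y) :
    f x + f y < 2 * f ((x + y) / 2) := by
  have := hf.2 hx hy hxy (by norm_num : (0 : ℝ) < 1 / 2) (by norm_num : (0 : ℝ) < 1 / 2)
    (by norm_num)
  simp only [smul_eq_mul] at this
  rw [show 1 / 2 * x + 1 / 2 * y = (x + y) / 2 by ring] at this
  linarith

lemma sum_lt_sum_transfer_half (hf : StrictConcaveOn ℝ (Set.Ici 0) f) {P : ι → ℝ}
    (hP : ∀ k, 0 ≤ P k) {i j : ι} (hlt : P j < P i) :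
    ∑ k, f (P k) < ∑ k, f (transfer P i j ((P i - P j) / 2) k) := by
  have hij : i ≠ j := fun h => hlt.ne (h ▸ rfl)
  set Q := transfer P i j ((P i - P j) / 2) with hQ
  have hQi : Q i = (P i + P j) / 2 := by rw [hQ, transfer_apply_left hij]; ring
  have hQj : Q j = (P i + P j) / 2 := by rw [hQ, transfer_apply_right hij]; ring
  have hgain : ∑ k, (f (Q k) - f (P k)) = (f (Q i) - f (P i)) + (f (Q j) - f (P j)) :=
    Fintype.sum_eq_add i j hij fun k hk => by rw [hQ, transfer_apply_of_ne hk.1 hk.2, sub_self]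
  have hmid := hf.add_lt_two_mul_map_add_div_two (Set.mem_Ici.2 (hP i))
    (Set.mem_Ici.2 (hP j)) hlt.ne'
  rw [sum_sub_distrib, hQi, hQj] at hgain
  linarith

lemma sum_lt_sum_add_single (hf : StrictMonoOn f (Set.Ici 0)) {P : ι → ℝ} (hP : ∀ k, 0 ≤ P k)
    (i : ι) {δ : ℝ} (hδ : 0 < δ) : ∑ k, f (P k) < ∑ k, f ((P + (Pi.single i δ : ι → ℝ)) k) := by
  have hle : ∀ k, P k ≤ (P + (Pi.single i δ : ι → ℝ)) k := fun k =>
    le_add_of_nonneg_right (single_apply_nonneg i hδ.le k)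
  refine sum_lt_sum (fun k _ => hf.monotoneOn (hP k) ((hP k).trans (hle k)) (hle k))
    ⟨i, mem_univ i, hf (hP i) ((hP i).trans (hle i)) (by simp [hδ])⟩

variable {S : Set (ι → ℝ)} {P : ι → ℝ}

lemma IsMaxOn.le_of_transfer_mem (hf : StrictConcaveOn ℝ (Set.Ici 0) f)
    (hmax : IsMaxOn (fun Q => ∑ k, f (Q k)) S P) (hP : ∀ k, 0 ≤ P k) {i j : ι}
    (hS : P j < P i → transfer P i j ((P i - P j) / 2) ∈ S) : P i ≤ P j := by
  by_contra! hlt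
  exact (sum_lt_sum_transfer_half hf hP hlt).not_ge (isMaxOn_iff.1 hmax _ (hS hlt))

lemma IsMaxOn.eq_div_of_budget (hconc : StrictConcaveOn ℝ (Set.Ici 0) f)
    (hmono : StrictMonoOn f (Set.Ici 0)) {τ c : ℝ} (hτ : 0 < τ)
    (hmax : IsMaxOn (fun Q => ∑ k, f (Q k)) {Q | (∀ k, 0 ≤ Q k) ∧ ∑ k, τ * Q k ≤ c} P)
    (hP : (∀ k, 0 ≤ P k) ∧ ∑ k, τ * P k ≤ c) (i : ι) :
    P i = c / (Fintype.card ι * τ) := by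
  have hle : ∀ a b : ι, P a ≤ P b := fun a b => hmax.le_of_transfer_mem hconc hP.1 fun hlt =>
    ⟨transfer_nonneg hP.1 b (by linarith) (by linarith [hP.1 b]), by
      simpa only [← mul_sum, sum_transfer, mem_univ, if_true, sub_add_cancel] using hP.2⟩
  have hconst : ∀ k, P k = P i := fun k => (hle k i).antisymm (hle i k)
  have hspent : ∑ k, τ * P k = c := by
    by_contra hne
    have hδ : 0 < (c - ∑ k, τ * P k) / τ := div_pos (by linarith [hP.2.lt_of_ne hne]) hτ
    refine (sum_lt_sum_add_single hmono hP.1 i hδ).not_ge (isMaxOn_iff.1 hmax _ ⟨fun k => ?_, ?_⟩)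
    · exact add_nonneg (hP.1 k) (single_apply_nonneg i hδ.le k)
    · simp only [Pi.add_apply, mul_add, sum_add_distrib, ← mul_sum, sum_pi_single', mem_univ,
        if_true]
      field_simp
      linarith
  have hcard : (0 : ℝ) < Fintype.card ι := Nat.cast_pos.2 (Fintype.card_pos_iff.2 ⟨i⟩)
  rw [← hspent, sum_congr rfl fun k _ => by rw [hconst k], sum_const, card_univ, nsmul_eq_mul]
  field_simp

end Objective

lemma strictConcaveOn_logb_one_add_mul_div {h σ2 : ℝ} (hh : 0 < h) (hσ : 0 < σ2) :
    StrictConcaveOn ℝ (Set.Ici 0) fun p => Real.logb 2 (1 + h * p / σ2) := by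
  refine ⟨convex_Ici 0, fun x hx y hy hxy a b ha hb hab => ?_⟩
  have hx' : 0 < 1 + h * x / σ2 := by have : (0 : ℝ) ≤ x := hx; positivity
  have hy' : 0 < 1 + h * y / σ2 := by have : (0 : ℝ) ≤ y := hy; positivity
  have hne : 1 + h * x / σ2 ≠ 1 + h * y / σ2 := fun e => hxy <| by
    field_simp at e
    exact mul_left_cancel₀ hh.ne' (by linarith)
  have hlog := strictConcaveOn_log_Ioi.2 hx' hy' hne ha hb hab
  have hcomb : a • (1 + h * x / σ2) + b • (1 + h * y / σ2) = 1 + h * (a • x + b • y) / σ2 := by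
    obtain rfl : b = 1 - a := by linarith
    simp only [smul_eq_mul]
    field_simp
    ring
  rw [hcomb] at hlog
  simp only [smul_eq_mul, Real.logb] at hlog ⊢
  have hL : 0 < Real.log 2 := Real.log_pos one_lt_two
  rw [mul_div_assoc', mul_div_assoc', ← add_div]
  exact div_lt_div_of_pos_right hlog hL

lemma strictMonoOn_logb_one_add_mul_div {h σ2 : ℝ} (hh : 0 < h) (hσ : 0 < σ2) :
    StrictMonoOn (fun p => Real.logb 2 (1 + h * p / σ2)) (Set.Ici 0) := by
  intro x hx y _ hxy
  have : (0 : ℝ) ≤ x := hx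
  exact Real.logb_lt_logb one_lt_two (by positivity) (by gcongr)

theorem stmt_8_general (M : ℕ) (τ h σ2 : ℝ)
    (hτ : 0 < τ) (hh : 0 < h) (hσ : 0 < σ2)
    (E : Fin M → ℝ)
    (Pstar : Fin M → ℝ)
    (hfeas : (∀ i, 0 ≤ Pstar i) ∧
      ∀ i, ∑ j ∈ Finset.Iic i, τ * Pstar j ≤ E i)
    (hopt : ∀ P : Fin M → ℝ,
      ((∀ i, 0 ≤ P i) ∧ ∀ i, ∑ j ∈ Finset.Iic i, τ * P j ≤ E i) →
      ∑ i, Real.logb 2 (1 + h * P i / σ2) ≤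
        ∑ i, Real.logb 2 (1 + h * Pstar i / σ2)) :
    (∀ i j : Fin M, i ≤ j → 0 < Pstar i → 0 < Pstar j → Pstar i ≤ Pstar j) ∧
    (∀ Etot : ℝ, (∀ i, E i = Etot) → ∀ i, Pstar i = Etot / (M * τ)) := by
  have hconc := strictConcaveOn_logb_one_add_mul_div hh hσ
  have hmax : IsMaxOn (fun P => ∑ i, Real.logb 2 (1 + h * P i / σ2))
      {P | EnergyFeasible τ E P} Pstar := isMaxOn_iff.2 hopt
  refine ⟨fun i j hij _ _ => ?_, fun Etot hE i => ?_⟩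
  · exact hmax.le_of_transfer_mem hconc hfeas.1 fun hlt =>
      EnergyFeasible.transfer_of_le hfeas hτ.le hij (by linarith) (by linarith [hfeas.1 j])
  · obtain rfl : E = fun _ => Etot := funext hE
    have : Nonempty (Fin M) := ⟨i⟩
    simp only [energyFeasible_const_iff hτ.le] at hmax
    simpa using hmax.eq_div_of_budget hconc (strictMonoOn_logb_one_add_mul_div hh hσ) hτ
      ((energyFeasible_const_iff hτ.le).1 hfeas) i

theorem stmt_8 (M : ℕ) (hM : 0 < M) (τ h σ2 : ℝ)
    (hτ : 0 < τ) (hh : 0 < h) (hσ : 0 < σ2)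
    (E : Fin M → ℝ) (hEmono : Monotone E)
    (Pstar : Fin M → ℝ)
    (hfeas : (∀ i, 0 ≤ Pstar i) ∧
      ∀ i, ∑ j ∈ Finset.Iic i, τ * Pstar j ≤ E i)
    (hopt : ∀ P : Fin M → ℝ,
      ((∀ i, 0 ≤ P i) ∧ ∀ i, ∑ j ∈ Finset.Iic i, τ * P j ≤ E i) →
      ∑ i, Real.logb 2 (1 + h * P i / σ2) ≤
        ∑ i, Real.logb 2 (1 + h * Pstar i / σ2)) :
    (∀ i j : Fin M, i ≤ j → 0 < Pstar i → 0 < Pstar j → Pstar i ≤ Pstar j) ∧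
    (∀ Etot : ℝ, (∀ i, E i = Etot) → ∀ i, Pstar i = Etot / (M * τ)) :=
  stmt_8_general M τ h σ2 hτ hh hσ E Pstar hfeas hopt
end
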